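/- For every R ∈ ℝ, the diagonal matrix Θ_d(R) = diag(1, 1−R, 1−R, 1−R, (1−R)²) satisfies the intertwining relation H_c(R)ᵀ Θ_d(R) = Θ_d(R) H_c(R); moreover Θ_d(R) is positive definite if and only if R < 1. -/
import Mathlib


open Matrix

/-- The Hamiltonian `H_c(R)` of Eq. (dvojak). -/
def Hc (R : ℝ) : Matrix (Fin 5) (Fin 5) ℝ :=
  !![2 + R, -1 + R, 0, 0, 0;
     -1, 2, -1, 0, 0;
     0, -1, 2, -1, 0;
     0, 0, -1, 2, -1 + R;
     0, 0, 0, -1, 2 + R]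

/-- The diagonal metric candidate `Θ_d(R) = diag(1, 1−R, 1−R, 1−R, (1−R)²)`. -/
def ThetaDiag (R : ℝ) : Matrix (Fin 5) (Fin 5) ℝ :=
  Matrix.diagonal ![1, 1 - R, 1 - R, 1 - R, (1 - R) ^ 2]

set_option maxHeartbeats 2000000 in
/-- `Θ_d(R)` intertwines `H_c(R)ᵀ` and `H_c(R)`, and it is
positive definite iff `R < 1`. -/
theorem Hc_diagonal_metric (R : ℝ) :
    (Hc R)ᵀ * ThetaDiag R = ThetaDiag R * Hc R ∧
      ((ThetaDiag R).PosDef ↔ R < 1) := by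
  constructor
  · ext i j
    rw [Matrix.mul_apply, Matrix.mul_apply, Fin.sum_univ_five, Fin.sum_univ_five]
    simp only [Matrix.transpose_apply]
    fin_cases i <;> fin_cases j <;>
      (simp [Hc, ThetaDiag, Matrix.diagonal_apply, Matrix.vecHead, Matrix.vecTail]
       <;> ring)
  · rw [ThetaDiag, Matrix.posDef_diagonal_iff]
    constructor
    · intro h
      have := h 1
      simp at this
      linarith
    · intro h i
      fin_cases i <;> simp <;> nlinarith
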